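/- Let $V,F:\mathbb{R}^d\to\mathbb{R}$ with $V$ $C^2$, $F$ $C^2$ even, $F(0)=0$, both with globally Lipschitz gradients. Fix $x\in\mathbb{R}^d$, $T>0$ and an absolutely continuous path $f$ with $f(0)=x$ and $\int_0^T\|\dot f\|^2<\infty$. Let $\Psi_\infty^x$ solve $\dot\Psi=-\nabla V(\Psi)$, $\Psi(0)=x$. Define $$J_N(f)=\inf_{f_2,\dots,f_N\in\mathcal{H}_x}\frac14\sum_{i=1}^N\int_0^T\Big\|\dot f_i+\nabla V(f_i)+\frac1N\sum_{k=1}^N\nabla F(f_i-f_k)\Big\|^2 dt \quad (f_1:=f).$$ Then $$\limsup_{N\to\infty}J_N(f)\ \le\ J_\infty(f):=\frac14\int_0^T\big\|\dot f(t)+\nabla V(f(t))+\nabla F(f(t)-\Psi_\infty^x(t))\big\|^2 dt.$$ -/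

import Mathlib

/-!
Bound `J_{n+1}(f)` by the cost of the configuration in which all `n` companions follow the
gradient flow `Ψ = Ψ_∞^x`. A companion then pays nothing for its own drift, and `∇F(0) = 0`
(`F` is even) removes every self-interaction, so the cost is
`¼ (∫ ‖ḟ + ∇V(f) + n/(n+1) ∇F(f - Ψ)‖² + n/(n+1)² ∫ ‖∇F(Ψ - f)‖²)`.
As `n → ∞` the second term vanishes, and the first integral tends to `J_∞(f)` because
`c ↦ ∫ ‖u + c • w‖²` is continuous for `u, w ∈ L²` (dominated convergence).
-/

open MeasureTheory Finset Filter

/-- The projected mean-field rate function `J_N(f)`: infimum of the mean-field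
rate function `I^N` over the companion paths `f_2, …, f_N` in `H_x`. Paths are
encoded together with their (square-integrable) derivatives via the integral
representation `g t = x + ∫_0^t g'`. -/
noncomputable def JNproj (d : ℕ) (T : ℝ) (x : EuclideanSpace ℝ (Fin d))
    (V F : EuclideanSpace ℝ (Fin d) → ℝ)
    (f f' : ℝ → EuclideanSpace ℝ (Fin d)) (N : ℕ) : ℝ :=
  sInf { r : ℝ | ∃ g g' : Fin N → ℝ → EuclideanSpace ℝ (Fin d),
    (∀ i : Fin N, (i : ℕ) = 0 → (∀ t ∈ Set.Icc (0 : ℝ) T, g i t = f t ∧ g' i t = f' t)) ∧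
    (∀ i, ∀ t ∈ Set.Icc (0 : ℝ) T, g i t = x + ∫ s in (0 : ℝ)..t, g' i s) ∧
    (∀ i, MemLp (g' i) 2 (volume.restrict (Set.Icc (0 : ℝ) T))) ∧
    r = (1 / 4) * ∑ i, ∫ t in (0 : ℝ)..T,
        ‖g' i t + gradient V (g i t)
          + (1 / (N : ℝ)) • ∑ k, gradient F (g i t - g k t)‖ ^ 2 }

open Topology

theorem gradient_zero_of_even {E : Type*} [NormedAddCommGroup E] [InnerProductSpace ℝ E]
    [CompleteSpace E] {F : E → ℝ} (hF : ∀ z, F (-z) = F z) : gradient F 0 = 0 := by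
  have h := (ContinuousLinearEquiv.neg ℝ : E ≃L[ℝ] E).comp_right_fderiv (f := F) (x := 0)
  rw [show F ∘ ContinuousLinearEquiv.neg ℝ = F from funext hF, map_zero] at h
  have h0 : fderiv ℝ F 0 = 0 := by
    ext v
    have hv : fderiv ℝ F 0 v = -fderiv ℝ F 0 v := by simpa using congr($h v)
    exact (by linarith : fderiv ℝ F 0 v = 0)
  simp [gradient, h0]

theorem ContinuousOn.memLp_of_isCompact {X E : Type*} [TopologicalSpace X] [MeasurableSpace X]
    [OpensMeasurableSpace X] [NormedAddCommGroup E] [SecondCountableTopologyEither X E]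
    {μ : Measure X} [IsFiniteMeasureOnCompacts μ] {s : Set X} (hs : IsCompact s)
    (hsm : MeasurableSet s) {g : X → E} (hg : ContinuousOn g s) (p : ENNReal) : MemLp g p (μ.restrict s) := by
  have : IsFiniteMeasure (μ.restrict s) := isFiniteMeasure_restrict.2 hs.measure_lt_top.ne
  obtain ⟨C, hC⟩ := hs.exists_bound_of_continuousOn hg
  exact MemLp.of_bound (hg.aestronglyMeasurable hsm) C ((ae_restrict_iff' hsm).2 (ae_of_all _ hC))

section Paths

variable {E : Type*} [NormedAddCommGroup E] [NormedSpace ℝ E]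

theorem continuousOn_of_eq_add_integral {T : ℝ} (hT : 0 ≤ T) {x : E} {f f' : ℝ → E}
    (hf : ∀ t ∈ Set.Icc 0 T, f t = x + ∫ s in (0 : ℝ)..t, f' s)
    (hf' : IntegrableOn f' (Set.Icc 0 T)) : ContinuousOn f (Set.Icc 0 T) := by
  have h := intervalIntegral.continuousOn_primitive_interval (a := 0) (b := T)
    (by rwa [Set.uIcc_of_le hT])
  rw [Set.uIcc_of_le hT] at h
  exact (continuousOn_const.add h).congr hf

theorem eq_add_integral_of_hasDerivAt [CompleteSpace E] {T : ℝ} {ψ ψ' : ℝ → E}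
    (hψ : ∀ t ∈ Set.Icc 0 T, HasDerivAt ψ (ψ' t) t) (hψ' : ContinuousOn ψ' (Set.Icc 0 T)) :
    ∀ t ∈ Set.Icc 0 T, ψ t = ψ 0 + ∫ s in (0 : ℝ)..t, ψ' s := by
  intro t ht
  have hsub : Set.uIcc 0 t ⊆ Set.Icc 0 T := by
    rw [Set.uIcc_of_le ht.1]
    exact Set.Icc_subset_Icc_right ht.2
  rw [intervalIntegral.integral_eq_sub_of_hasDerivAt (fun s hs => hψ s (hsub hs))
    ((hψ'.mono hsub).intervalIntegrable), add_sub_cancel]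

theorem continuous_integral_norm_add_smul_sq {α : Type*} [MeasurableSpace α] {μ : Measure α}
    {u w : α → E} (hu : MemLp u 2 μ) (hw : MemLp w 2 μ) :
    Continuous fun c : ℝ => ∫ a, ‖u a + c • w a‖ ^ 2 ∂μ := by
  refine continuous_iff_continuousAt.2 fun c₀ => continuousAt_of_dominated
    (bound := fun a => (‖u a‖ + (|c₀| + 1) * ‖w a‖) ^ 2) ?_ ?_ ?_ ?_
  · exact Eventually.of_forall fun c =>
      (hu.aestronglyMeasurable.add (hw.aestronglyMeasurable.const_smul c)).norm.pow 2
  · filter_upwards [Metric.ball_mem_nhds c₀ one_pos] with c hc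
    refine ae_of_all _ fun a => ?_
    have hc' : |c| ≤ |c₀| + 1 := by
      rw [Metric.mem_ball, Real.dist_eq] at hc
      linarith [abs_sub_abs_le_abs_sub c c₀]
    rw [Real.norm_eq_abs, abs_pow, abs_norm]
    gcongr
    calc ‖u a + c • w a‖ ≤ ‖u a‖ + |c| * ‖w a‖ := by
          simpa [norm_smul] using norm_add_le (u a) (c • w a)
      _ ≤ ‖u a‖ + (|c₀| + 1) * ‖w a‖ := by gcongr
  · exact (hu.norm.add (hw.norm.const_mul _)).integrable_sq
  · exact ae_of_all _ fun a => by fun_prop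

theorem continuous_intervalIntegral_norm_add_smul_sq {T : ℝ} (hT : 0 ≤ T) {u w : ℝ → E}
    (hu : MemLp u 2 (volume.restrict (Set.Icc 0 T)))
    (hw : MemLp w 2 (volume.restrict (Set.Icc 0 T))) :
    Continuous fun c : ℝ => ∫ t in (0 : ℝ)..T, ‖u t + c • w t‖ ^ 2 := by
  have hle : volume.restrict (Set.Ioc 0 T) ≤ volume.restrict (Set.Icc 0 T) :=
    Measure.restrict_mono Set.Ioc_subset_Icc_self le_rfl
  simp_rw [intervalIntegral.integral_of_le hT]
  exact continuous_integral_norm_add_smul_sq (hu.mono_measure hle) (hw.mono_measure hle)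

end Paths

theorem quarter_mul_sum_integral_norm_sq_nonneg {E ι : Type*} [NormedAddCommGroup E]
    [Fintype ι] {T : ℝ} (hT : 0 ≤ T) (h : ι → ℝ → E) :
    0 ≤ (1 / 4 : ℝ) * ∑ i, ∫ t in (0 : ℝ)..T, ‖h i t‖ ^ 2 :=
  mul_nonneg (by norm_num) (sum_nonneg fun _ _ =>
    intervalIntegral.integral_nonneg hT fun _ _ => sq_nonneg _)

namespace JNproj

variable {d : ℕ} {T : ℝ} {x : EuclideanSpace ℝ (Fin d)}
  {V F : EuclideanSpace ℝ (Fin d) → ℝ} {f f' : ℝ → EuclideanSpace ℝ (Fin d)}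

theorem nonneg (hT : 0 ≤ T) (N : ℕ) : 0 ≤ JNproj d T x V F f f' N := by
  refine Real.sInf_nonneg ?_
  rintro r ⟨g, g', -, -, -, rfl⟩
  exact quarter_mul_sum_integral_norm_sq_nonneg hT _

theorem le_of_config (hT : 0 ≤ T) {N : ℕ} (g g' : Fin N → ℝ → EuclideanSpace ℝ (Fin d))
    (hg0 : ∀ i : Fin N, (i : ℕ) = 0 →
      (∀ t ∈ Set.Icc (0 : ℝ) T, g i t = f t ∧ g' i t = f' t))
    (hg : ∀ i, ∀ t ∈ Set.Icc (0 : ℝ) T, g i t = x + ∫ s in (0 : ℝ)..t, g' i s)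
    (hg' : ∀ i, MemLp (g' i) 2 (volume.restrict (Set.Icc (0 : ℝ) T))) :
    JNproj d T x V F f f' N ≤ (1 / 4) * ∑ i, ∫ t in (0 : ℝ)..T,
        ‖g' i t + gradient V (g i t)
          + (1 / (N : ℝ)) • ∑ k, gradient F (g i t - g k t)‖ ^ 2 := by
  refine csInf_le ⟨0, ?_⟩ ⟨g, g', hg0, hg, hg', rfl⟩
  rintro r ⟨g, g', -, -, -, rfl⟩
  exact quarter_mul_sum_integral_norm_sq_nonneg hT _

theorem le_of_companions (hT : 0 ≤ T)
    (hf : ∀ t ∈ Set.Icc (0 : ℝ) T, f t = x + ∫ s in (0 : ℝ)..t, f' s)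
    (hf' : MemLp f' 2 (volume.restrict (Set.Icc (0 : ℝ) T)))
    {ψ ψ' : ℝ → EuclideanSpace ℝ (Fin d)}
    (hψ : ∀ t ∈ Set.Icc (0 : ℝ) T, ψ t = x + ∫ s in (0 : ℝ)..t, ψ' s)
    (hψ' : MemLp ψ' 2 (volume.restrict (Set.Icc (0 : ℝ) T)))
    (hψV : ∀ t ∈ Set.Icc (0 : ℝ) T, ψ' t + gradient V (ψ t) = 0)
    (hF0 : gradient F 0 = 0) (n : ℕ) :
    JNproj d T x V F f f' (n + 1) ≤ (1 / 4) *
      ((∫ t in (0 : ℝ)..T,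
          ‖f' t + gradient V (f t) + ((n : ℝ) / (n + 1)) • gradient F (f t - ψ t)‖ ^ 2)
        + n / (n + 1) ^ 2 * ∫ t in (0 : ℝ)..T, ‖gradient F (ψ t - f t)‖ ^ 2) := by
  refine (le_of_config hT (fun i => if i = 0 then f else ψ) (fun i => if i = 0 then f' else ψ')
    ?_ ?_ ?_).trans_eq ?_
  · intro i hi t _
    obtain rfl : i = 0 := Fin.ext hi
    simp
  · intro i
    split_ifs
    · exact hf
    · exact hψ
  · intro i
    split_ifs
    · exact hf'
    · exact hψ'
  · simp only [Fin.sum_univ_succ, if_pos, Fin.succ_ne_zero, if_false, sub_self, hF0, zero_add,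
      sum_const, card_univ, Fintype.card_fin, smul_zero, add_zero, ← Nat.cast_smul_eq_nsmul ℝ,
      smul_smul, smul_eq_mul, Nat.cast_add, Nat.cast_one]
    have hrow : ∫ t in (0 : ℝ)..T,
        ‖ψ' t + gradient V (ψ t) + (1 / ((n : ℝ) + 1)) • gradient F (ψ t - f t)‖ ^ 2
        = (1 / ((n : ℝ) + 1)) ^ 2 * ∫ t in (0 : ℝ)..T, ‖gradient F (ψ t - f t)‖ ^ 2 := by
      rw [← intervalIntegral.integral_const_mul]
      refine intervalIntegral.integral_congr fun t ht => ?_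
      rw [Set.uIcc_of_le hT] at ht
      simp only [hψV t ht, zero_add, norm_smul, mul_pow, Real.norm_eq_abs, sq_abs]
    rw [hrow, one_div_mul_eq_div (_ + 1), one_div_pow, ← mul_assoc, mul_one_div]

end JNproj

theorem tendsto_natCast_div_add_one_sq :
    Tendsto (fun n : ℕ => (n : ℝ) / (n + 1) ^ 2) atTop (𝓝 0) := by
  have h := (tendsto_natCast_div_add_atTop (1 : ℝ)).mul tendsto_one_div_add_atTop_nhds_zero_nat
  rw [mul_zero] at h
  refine h.congr fun n => ?_
  rw [div_mul_div_comm, mul_one, sq]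

theorem limsup_JN_le_Jinf_general
    (d : ℕ) (T : ℝ) (hT : 0 < T) (x : EuclideanSpace ℝ (Fin d))
    (V : EuclideanSpace ℝ (Fin d) → ℝ)
    (KV : NNReal) (hVlip : LipschitzWith KV (gradient V))
    (F : EuclideanSpace ℝ (Fin d) → ℝ)
    (hFeven : ∀ z, F (-z) = F z)
    (KF : NNReal) (hFlip : LipschitzWith KF (gradient F))
    (f f' : ℝ → EuclideanSpace ℝ (Fin d))
    (hf : ∀ t ∈ Set.Icc (0 : ℝ) T, f t = x + ∫ s in (0 : ℝ)..t, f' s)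
    (hfL2 : MemLp f' 2 (volume.restrict (Set.Icc (0 : ℝ) T)))
    (Ψinf : ℝ → EuclideanSpace ℝ (Fin d)) (hΨinf0 : Ψinf 0 = x)
    (hΨinf : ∀ t ∈ Set.Icc (0 : ℝ) T, HasDerivAt Ψinf (-(gradient V (Ψinf t))) t) :
    limsup (fun N : ℕ => JNproj d T x V F f f' N) atTop
      ≤ (1 / 4) * ∫ t in (0 : ℝ)..T,
          ‖f' t + gradient V (f t) + gradient F (f t - Ψinf t)‖ ^ 2 := by
  have hΨc : ContinuousOn Ψinf (Set.Icc 0 T) := fun t ht =>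
    (hΨinf t ht).continuousAt.continuousWithinAt
  have hfc := continuousOn_of_eq_add_integral hT.le hf (hfL2.integrable one_le_two)
  have hΨ'c : ContinuousOn (fun t => -gradient V (Ψinf t)) (Set.Icc 0 T) :=
    (hVlip.continuous.comp_continuousOn hΨc).neg
  have hbound := JNproj.le_of_companions (V := V) hT.le hf hfL2
    (hΨinf0 ▸ eq_add_integral_of_hasDerivAt hΨinf hΨ'c)
    (hΨ'c.memLp_of_isCompact isCompact_Icc measurableSet_Icc 2)
    (fun t _ => neg_add_cancel _) (gradient_zero_of_even hFeven)
  have hu : MemLp (fun t => f' t + gradient V (f t)) 2 (volume.restrict (Set.Icc 0 T)) :=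
    hfL2.add ((hVlip.continuous.comp_continuousOn hfc).memLp_of_isCompact isCompact_Icc
      measurableSet_Icc 2)
  have hw : MemLp (fun t => gradient F (f t - Ψinf t)) 2 (volume.restrict (Set.Icc 0 T)) :=
    (hFlip.continuous.comp_continuousOn (hfc.sub hΨc)).memLp_of_isCompact isCompact_Icc
      measurableSet_Icc 2
  have hlim := ((((continuous_intervalIntegral_norm_add_smul_sq hT.le hu hw).tendsto 1).comp
    (tendsto_natCast_div_add_atTop (1 : ℝ))).add (tendsto_natCast_div_add_one_sq.mul_const
      (∫ t in (0 : ℝ)..T, ‖gradient F (Ψinf t - f t)‖ ^ 2))).const_mul (1 / 4 : ℝ)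
  simp only [one_smul, zero_mul, add_zero] at hlim
  calc limsup (fun N : ℕ => JNproj d T x V F f f' N) atTop
      = limsup (fun n : ℕ => JNproj d T x V F f f' (n + 1)) atTop := (limsup_nat_add _ 1).symm
    _ ≤ _ := limsup_le_limsup (Eventually.of_forall hbound)
        (isBoundedUnder_of_eventually_ge (Eventually.of_forall fun n =>
          JNproj.nonneg hT.le (n + 1))).isCoboundedUnder_le
        hlim.isBoundedUnder_le
    _ = _ := hlim.limsup_eq

theorem limsup_JN_le_Jinf
    (d : ℕ) (T : ℝ) (hT : 0 < T) (x : EuclideanSpace ℝ (Fin d))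
    (V : EuclideanSpace ℝ (Fin d) → ℝ) (hV : ContDiff ℝ 2 V)
    (KV : NNReal) (hVlip : LipschitzWith KV (gradient V))
    (F : EuclideanSpace ℝ (Fin d) → ℝ) (hF : ContDiff ℝ 2 F)
    (hFeven : ∀ z, F (-z) = F z) (hF0 : F 0 = 0)
    (KF : NNReal) (hFlip : LipschitzWith KF (gradient F))
    (f f' : ℝ → EuclideanSpace ℝ (Fin d))
    (hf : ∀ t ∈ Set.Icc (0 : ℝ) T, f t = x + ∫ s in (0 : ℝ)..t, f' s)
    (hfL2 : MemLp f' 2 (volume.restrict (Set.Icc (0 : ℝ) T)))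
    (Ψinf : ℝ → EuclideanSpace ℝ (Fin d)) (hΨinf0 : Ψinf 0 = x)
    (hΨinf : ∀ t ∈ Set.Icc (0 : ℝ) T, HasDerivAt Ψinf (-(gradient V (Ψinf t))) t) :
    limsup (fun N : ℕ => JNproj d T x V F f f' N) atTop
      ≤ (1 / 4) * ∫ t in (0 : ℝ)..T,
          ‖f' t + gradient V (f t) + gradient F (f t - Ψinf t)‖ ^ 2 :=
  limsup_JN_le_Jinf_general d T hT x V KV hVlip F hFeven KF hFlip f f' hf hfL2 Ψinf hΨinf0 hΨinf
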